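/- arXiv:2209.02231 — 2 statements merged into one kernel-verified Lean document; each statement's English description precedes it below -/
import Mathlib

section
/- Sequential composition: if mechanisms M_1, ..., M_t each satisfy ε-DP (with respect to the same neighboring relation, and each M_i may depend on the outputs of M_1,...,M_{i-1}), then the composed mechanism (M_1, ..., M_t) satisfies tε-DP. -/
open Real Finset

/-- Adaptive sequential composition: `t` mechanisms, each ε-DP for every
    history of previous outputs, compose to a `t·ε`-DP mechanism. -/
theorem dp_sequential_composition {X Y : Type} [Countable Y]
    (neighbor : X → X → Prop) (ε : ℝ) (hε : 0 ≤ ε) (t : ℕ)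
    (M : ℕ → X → List Y → Y → ℝ)
    (hnn : ∀ i x hist y, 0 ≤ M i x hist y)
    (hDP : ∀ i, i < t → ∀ hist x x', neighbor x x' →
      ∀ y, M i x hist y ≤ exp ε * M i x' hist y) :
    ∀ x x', neighbor x x' → ∀ ys : Fin t → Y,
      (∏ i : Fin t, M i x ((List.ofFn ys).take i) (ys i))
        ≤ exp ((t : ℝ) * ε) * ∏ i : Fin t, M i x' ((List.ofFn ys).take i) (ys i) := by
  intro x x' hnb ys
  have h : (∏ i : Fin t, M i x ((List.ofFn ys).take i) (ys i))
      ≤ ∏ i : Fin t, (exp ε * M i x' ((List.ofFn ys).take i) (ys i)) := by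
    apply Finset.prod_le_prod
    · intro i _; exact hnn _ _ _ _
    · intro i _; exact hDP i i.isLt _ x x' hnb _
  calc (∏ i : Fin t, M i x ((List.ofFn ys).take i) (ys i))
      ≤ ∏ i : Fin t, (exp ε * M i x' ((List.ofFn ys).take i) (ys i)) := h
    _ = exp ((t : ℝ) * ε) * ∏ i : Fin t, M i x' ((List.ofFn ys).take i) (ys i) := by
        rw [Finset.prod_mul_distrib, Finset.prod_const, Finset.card_univ, Fintype.card_fin,
          ← Real.exp_nat_mul]
end

section
/- The (discrete) Laplace mechanism satisfies ε-DP: if f : X → ℤ has sensitivity Δ (i.e., |f(x) − f(x')| ≤ Δ for all neighboring x, x'), then the mechanism A(x) = f(x) + Z, where Z is a discrete Laplace random variable with Pr[Z = k] ∝ exp(−ε|k|/Δ), satisfies: for all neighboring x, x' and all outputs y, Pr[A(x)=y] ≤ e^ε · Pr[A(x')=y]. -/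
open Real

/-- The discrete Laplace mechanism `A(x) = f(x) + Z`, with
    `Pr[Z = k] = c·exp(−ε|k|/Δ)`, satisfies ε-DP when `f` has sensitivity `Δ`. -/
theorem discrete_laplace_dp {X : Type}
    (neighbor : X → X → Prop) (f : X → ℤ) (Δ ε c : ℝ)
    (hΔ : 0 < Δ) (hε : 0 < ε) (hc : 0 < c)
    (hsens : ∀ x x', neighbor x x' → |(f x : ℝ) - (f x' : ℝ)| ≤ Δ) :
    ∀ x x', neighbor x x' → ∀ y : ℤ,
      c * exp (-ε * |(y : ℝ) - (f x : ℝ)| / Δ)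
        ≤ exp ε * (c * exp (-ε * |(y : ℝ) - (f x' : ℝ)| / Δ)) := by
  intro x x' hn y
  have hs := hsens x x' hn
  have htri : |(y : ℝ) - (f x' : ℝ)| ≤ |(y : ℝ) - (f x : ℝ)| + Δ := by
    calc |(y : ℝ) - (f x' : ℝ)| = |((y : ℝ) - (f x : ℝ)) + ((f x : ℝ) - (f x' : ℝ))| := by ring_nf
    _ ≤ |(y : ℝ) - (f x : ℝ)| + |(f x : ℝ) - (f x' : ℝ)| := abs_add_le _ _
    _ ≤ |(y : ℝ) - (f x : ℝ)| + Δ := by linarith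
  have hexp : -ε * |(y : ℝ) - (f x : ℝ)| / Δ ≤ ε + -ε * |(y : ℝ) - (f x' : ℝ)| / Δ := by
    have key : -ε * |(y : ℝ) - (f x : ℝ)| / Δ - -ε * |(y : ℝ) - (f x' : ℝ)| / Δ ≤ ε := by
      rw [div_sub_div_same, div_le_iff₀ hΔ]
      nlinarith [hε.le]
    linarith
  calc c * exp (-ε * |(y : ℝ) - (f x : ℝ)| / Δ)
      ≤ c * exp (ε + -ε * |(y : ℝ) - (f x' : ℝ)| / Δ) := by
        exact mul_le_mul_of_nonneg_left (exp_le_exp.mpr hexp) hc.le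
    _ = exp ε * (c * exp (-ε * |(y : ℝ) - (f x' : ℝ)| / Δ)) := by
        rw [exp_add]; ring
end
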